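/- Let ε_t → 0, let α^(ε_t) ∈ [1,A]^n be smoothed autobidding equilibria for mechanism M ∈ {GSP, VCG} converging to a limit α*, and let the induced distributions π^(ε_t) over allocations converge (pointwise on the finite set of allocations) to a limit distribution π*. Then (α*, π*) is an autobidding equilibrium of the original auction: every allocation in the support of π* is valid under the limit bids b*_{ij} = α*_i v_{ij}; V_i(π*) ≥ P_i^M(π*, b*) for every bidder i; and α*_i = A for every bidder i with V_i(π*) > P_i^M(π*, b*). -/

import Mathlib

open Finset MeasureTheory

namespace SponsoredShopping

noncomputable section

/-- An item is a pair `(i, j)`: bidder `i`'s `j`-th item. -/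
abbrev Item (n m : ℕ) : Type := Fin n × Fin m

/-- An allocation assigns to each rank `k` (0-based) an item. -/
abbrev Alloc (n m : ℕ) : Type := Fin (n * m) ≃ Item n m

/-- Maximum of `f` over a finite set, with value `0` on the empty set. -/
def fmax {ι : Type*} (s : Finset ι) (f : ι → ℝ) : ℝ :=
  (s.sup fun i => (f i : WithBot ℝ)).unbotD 0

variable {n m : ℕ}

/-- An allocation is valid under bids `b` if bids are nonincreasing along ranks. -/
def ValidUnder (b : Item n m → ℝ) (a : Alloc n m) : Prop :=
  ∀ k k' : Fin (n * m), k ≤ k' → b (a k') ≤ b (a k)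

/-- The value of bidder `i` under allocation `a`
(`c k` is the CTR of slot `k`, with `c k = 0` for `k ≥ K`). -/
def bidderValue (c : ℕ → ℝ) (v : Item n m → ℝ) (a : Alloc n m) (i : Fin n) : ℝ :=
  ∑ k : Fin (n * m), if (a k).1 = i then c k * v (a k) else 0

/-- Social welfare of an allocation. -/
def wel (c : ℕ → ℝ) (v : Item n m → ℝ) (a : Alloc n m) : ℝ :=
  ∑ k : Fin (n * m), c k * v (a k)

/-- Optimal social welfare. -/
def welOpt (c : ℕ → ℝ) (v : Item n m → ℝ) : ℝ :=
  fmax (univ : Finset (Alloc n m)) (wel c v)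

/-- GSP per-click price of the item ranked `k`: highest bid among lower-ranked
items belonging to other bidders (`0` if none). -/
def gspPrice (b : Item n m → ℝ) (a : Alloc n m) (k : Fin (n * m)) : ℝ :=
  fmax (univ.filter fun k' : Fin (n * m) => k < k' ∧ (a k').1 ≠ (a k).1)
    (fun k' => b (a k'))

/-- Total GSP payment of bidder `i`. -/
def gspPay (c : ℕ → ℝ) (b : Item n m → ℝ) (a : Alloc n m) (i : Fin n) : ℝ :=
  ∑ k : Fin (n * m), if (a k).1 = i then c k * gspPrice b a k else 0

/-- Bid-welfare of an allocation. -/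
def bidWelfare (c : ℕ → ℝ) (b : Item n m → ℝ) (a : Alloc n m) : ℝ :=
  ∑ k : Fin (n * m), c k * b (a k)

/-- Bids with bidder `i`'s bids zeroed out. -/
def exclBids (b : Item n m → ℝ) (i : Fin n) : Item n m → ℝ :=
  fun x => if x.1 = i then 0 else b x

/-- Bid-welfare obtained by bidders other than `i` in allocation `a`. -/
def othersWelfare (c : ℕ → ℝ) (b : Item n m → ℝ) (a : Alloc n m) (i : Fin n) : ℝ :=
  ∑ k : Fin (n * m), if (a k).1 ≠ i then c k * b (a k) else 0

/-- Optimal counterfactual bid-welfare without bidder `i`. -/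
def woptWithout (c : ℕ → ℝ) (b : Item n m → ℝ) (i : Fin n) : ℝ :=
  fmax (univ : Finset (Alloc n m)) (fun a' => bidWelfare c (exclBids b i) a')

/-- VCG payment of bidder `i`. -/
def vcgPay (c : ℕ → ℝ) (b : Item n m → ℝ) (a : Alloc n m) (i : Fin n) : ℝ :=
  woptWithout c b i - othersWelfare c b a i

/-- The two mechanisms considered. -/
inductive Mech | gsp | vcg

/-- Payment of bidder `i` under mechanism `M`. -/
def pay : Mech → (ℕ → ℝ) → (Item n m → ℝ) → Alloc n m → Fin n → ℝ
  | .gsp => gspPay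
  | .vcg => vcgPay

/-- `S_k(a)`: the set of items assigned to the first `k` slots in `a`. -/
def topk (a : Alloc n m) (k : ℕ) : Finset (Item n m) :=
  (univ.filter fun r : Fin (n * m) => (r : ℕ) < k).image a

/-- The (unnormalized) uniform measure on the cube `[0, ε]^{items}`. -/
def cube (n m : ℕ) (ε : ℝ) : Measure (Item n m → ℝ) :=
  Measure.pi fun _ => volume.restrict (Set.Icc (0 : ℝ) ε)

/-- Perturbed bids `b̃_{ij} = α_i v_{ij} + ξ_{ij}`. -/
def pert (α : Fin n → ℝ) (v : Item n m → ℝ) (ξ : Item n m → ℝ) : Item n m → ℝ :=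
  fun x => α x.1 * v x + ξ x

/-- The rank (0-based slot) of item `x` under bids `b`: the number of items with
strictly higher bids.  When bids are tie-free this is the position of `x` in the
unique valid allocation. -/
def rnk (b : Item n m → ℝ) (x : Item n m) : ℕ :=
  (univ.filter fun y : Item n m => b x < b y).card

/-- The value of bidder `i` under the (a.s. unique) valid allocation for bids `b`. -/
def valBid (c : ℕ → ℝ) (v : Item n m → ℝ) (b : Item n m → ℝ) (i : Fin n) : ℝ :=
  ∑ j : Fin m, c (rnk b (i, j)) * v (i, j)

/-- GSP payment of bidder `i` under the (a.s. unique) valid allocation for bids `b`. -/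
def gspPayBid (c : ℕ → ℝ) (b : Item n m → ℝ) (i : Fin n) : ℝ :=
  ∑ j : Fin m, c (rnk b (i, j)) *
    fmax (univ.filter fun y : Item n m => y.1 ≠ i ∧ b y < b (i, j)) b

/-- Bid-welfare of bidders other than `i` under the (a.s. unique) valid allocation. -/
def othersWelfareBid (c : ℕ → ℝ) (b : Item n m → ℝ) (i : Fin n) : ℝ :=
  ∑ x : Item n m, if x.1 ≠ i then c (rnk b x) * b x else 0

/-- VCG payment of bidder `i` under the (a.s. unique) valid allocation for bids `b`. -/
def vcgPayBid (c : ℕ → ℝ) (b : Item n m → ℝ) (i : Fin n) : ℝ :=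
  woptWithout c b i - othersWelfareBid c b i

/-- Payment under mechanism `M` as a function of bids alone. -/
def payBid : Mech → (ℕ → ℝ) → (Item n m → ℝ) → Fin n → ℝ
  | .gsp => gspPayBid
  | .vcg => vcgPayBid

/-- Smoothed expected value `𝒱_i^ε(α)` of bidder `i`. -/
def sVal (c : ℕ → ℝ) (v : Item n m → ℝ) (ε : ℝ) (α : Fin n → ℝ) (i : Fin n) : ℝ :=
  (ε ^ (n * m))⁻¹ * ∫ ξ, valBid c v (pert α v ξ) i ∂(cube n m ε)

/-- Smoothed expected payment `𝒫_i^{M,ε}(α)` of bidder `i`. -/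
def sPay (M : Mech) (c : ℕ → ℝ) (v : Item n m → ℝ) (ε : ℝ) (α : Fin n → ℝ)
    (i : Fin n) : ℝ :=
  (ε ^ (n * m))⁻¹ * ∫ ξ, payBid M c (pert α v ξ) i ∂(cube n m ε)

/-- The induced distribution over allocations in the smoothed game:
the probability that `a` is the realized (valid) allocation. -/
def inducedDist (v : Item n m → ℝ) (ε : ℝ) (α : Fin n → ℝ) (a : Alloc n m) : ℝ :=
  (ε ^ (n * m))⁻¹ * ((cube n m ε) {ξ | ValidUnder (pert α v ξ) a}).toReal


/-!
For tie-free bids the valid allocation is unique (it sorts the items by decreasing bid), and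
on it the allocation-based value and payments agree with the bid-only formulas `valBid` and
`payBid`. The uniform noise makes ties a null event, so the smoothed value is exactly
`∑ₐ π^ε(a) Vᵢ(a)`. Every payment is Lipschitz in the bids, with constant `2 ∑ₖ |cₖ|`, and the
noise moves each bid by at most `ε`, so the smoothed payment is within `O(ε)` of
`∑ₐ π^ε(a) Pᵢ(a, α v)`. Both sides therefore converge to their values at `(α*, π*)`, and the
ROI constraint and the maximality condition pass to the limit. An allocation with positive
limit mass is valid, along the sequence, for bids within `ε` of `α v`, hence valid for `α* v`.
-/

open Filter Topology

section Fmax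
variable {ι : Type*} {s : Finset ι} {f g : ι → ℝ} {δ : ℝ}

lemma fmax_eq_sup' (hs : s.Nonempty) : fmax s f = s.sup' hs f := by
  change WithBot.unbotD 0 (s.sup (WithBot.some ∘ f)) = _
  rw [← Finset.coe_sup' hs, WithBot.unbotD_coe]

lemma fmax_image {κ : Type*} [DecidableEq ι] (t : Finset κ) (e : κ → ι) :
    fmax (t.image e) f = fmax t (f ∘ e) := by
  rw [fmax, fmax, Finset.sup_image]
  rfl

lemma fmax_le_fmax_add (hs : s.Nonempty) (h : ∀ x ∈ s, f x ≤ g x + δ) :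
    fmax s f ≤ fmax s g + δ := by
  rw [fmax_eq_sup' hs, fmax_eq_sup' hs]
  exact Finset.sup'_le hs _ fun x hx =>
    (h x hx).trans (add_le_add_left (Finset.le_sup' g hx) δ)

lemma abs_fmax_sub_fmax_le (hδ : 0 ≤ δ) (h : ∀ x ∈ s, |f x - g x| ≤ δ) :
    |fmax s f - fmax s g| ≤ δ := by
  rcases s.eq_empty_or_nonempty with rfl | hs
  · simpa [fmax] using hδ
  rw [abs_sub_le_iff, sub_le_iff_le_add', sub_le_iff_le_add']
  refine ⟨fmax_le_fmax_add hs fun x hx => ?_, fmax_le_fmax_add hs fun x hx => ?_⟩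
  · linarith [(abs_sub_le_iff.mp (h x hx)).1]
  · linarith [(abs_sub_le_iff.mp (h x hx)).2]

end Fmax

section Ranking
variable {n m : ℕ} {b : Item n m → ℝ} {a a' : Alloc n m}

lemma validUnder_iff_antitone : ValidUnder b a ↔ Antitone (b ∘ a) := Iff.rfl

lemma strictAnti_of_validUnder (hb : Function.Injective b) (ha : ValidUnder b a) :
    StrictAnti (b ∘ a) :=
  (validUnder_iff_antitone.mp ha).strictAnti_of_injective (hb.comp a.injective)

def sortAlloc (b : Item n m → ℝ) : Alloc n m :=
  (Tuple.sort fun k => -b (finProdFinEquiv.symm k)).trans finProdFinEquiv.symm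

lemma validUnder_sortAlloc (b : Item n m → ℝ) : ValidUnder b (sortAlloc b) := fun _ _ hk =>
  neg_le_neg_iff.mp (Tuple.monotone_sort (fun k => -b (finProdFinEquiv.symm k)) hk)

lemma rnk_eq_of_validUnder (hb : Function.Injective b) (ha : ValidUnder b a) (k : Fin (n * m)) :
    rnk b (a k) = k := by
  have hlt : ∀ k', b (a k) < b (a k') ↔ k' < k := fun k' =>
    (strictAnti_of_validUnder hb ha).lt_iff_gt
  rw [rnk, ← Finset.image_univ_equiv a, Finset.filter_image,
    Finset.card_image_of_injective _ a.injective]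
  simp only [hlt]
  rw [← Fin.card_Iio k]
  congr 1
  ext k'
  simp

lemma eq_of_validUnder (hb : Function.Injective b) (ha : ValidUnder b a)
    (ha' : ValidUnder b a') : a = a' := by
  have hsymm : a.symm = a'.symm := Equiv.ext fun x => Fin.ext <| by
    rw [← rnk_eq_of_validUnder hb ha (a.symm x), ← rnk_eq_of_validUnder hb ha' (a'.symm x)]
    simp
  simpa using congrArg Equiv.symm hsymm

lemma validUnder_iff_eq_sortAlloc (hb : Function.Injective b) :
    ValidUnder b a ↔ a = sortAlloc b :=
  ⟨fun ha => eq_of_validUnder hb ha (validUnder_sortAlloc b),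
    fun h => h ▸ validUnder_sortAlloc b⟩

end Ranking

section Reindex
variable {n m : ℕ} {c : ℕ → ℝ} {b : Item n m → ℝ} {a : Alloc n m}

lemma sum_alloc_eq_sum_rnk (hb : Function.Injective b) (ha : ValidUnder b a)
    (g : ℕ → Item n m → ℝ) : ∑ k : Fin (n * m), g k (a k) = ∑ x, g (rnk b x) x := by
  rw [← Equiv.sum_comp a fun x => g (rnk b x) x]
  simp only [rnk_eq_of_validUnder hb ha]

lemma sum_ite_fst_eq (i : Fin n) (h : Item n m → ℝ) :
    ∑ x : Item n m, (if x.1 = i then h x else 0) = ∑ j, h (i, j) := by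
  rw [Fintype.sum_prod_type, Finset.sum_eq_single i (fun i' _ hi' => by simp [hi']) (by simp)]
  simp

lemma valBid_eq_bidderValue (v : Item n m → ℝ) (hb : Function.Injective b)
    (ha : ValidUnder b a) (i : Fin n) : valBid c v b i = bidderValue c v a i := by
  rw [bidderValue, sum_alloc_eq_sum_rnk hb ha fun r x => if x.1 = i then c r * v x else 0,
    sum_ite_fst_eq, valBid]

lemma gspPrice_eq_fmax (hb : Function.Injective b) (ha : ValidUnder b a) (k : Fin (n * m)) :
    gspPrice b a k = fmax (univ.filter fun y => y.1 ≠ (a k).1 ∧ b y < b (a k)) b := by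
  rw [← Finset.image_univ_equiv a, Finset.filter_image, fmax_image, gspPrice]
  have hlt : ∀ k', b (a k') < b (a k) ↔ k < k' := fun k' =>
    (strictAnti_of_validUnder hb ha).lt_iff_gt
  congr 1
  ext k'
  simp only [Finset.mem_filter, Finset.mem_univ, true_and, hlt, and_comm]

lemma gspPayBid_eq_gspPay (hb : Function.Injective b) (ha : ValidUnder b a) (i : Fin n) :
    gspPayBid c b i = gspPay c b a i := by
  simp only [gspPay, gspPrice_eq_fmax hb ha]
  rw [sum_alloc_eq_sum_rnk hb ha fun r x => if x.1 = i then
      c r * fmax (univ.filter fun y => y.1 ≠ x.1 ∧ b y < b x) b else 0,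
    sum_ite_fst_eq, gspPayBid]

lemma payBid_eq_pay (M : Mech) (hb : Function.Injective b) (ha : ValidUnder b a)
    (i : Fin n) : payBid M c b i = pay M c b a i := by
  cases M
  · exact gspPayBid_eq_gspPay hb ha i
  · rw [payBid, pay, vcgPayBid, vcgPay, othersWelfareBid, othersWelfare,
      sum_alloc_eq_sum_rnk hb ha fun r x => if x.1 ≠ i then c r * b x else 0]

end Reindex

lemma abs_sum_mul_sub_sum_mul_le {κ : Type*} [Fintype κ] (c : κ → ℝ) {f g : κ → ℝ} {δ : ℝ}
    (h : ∀ k, |f k - g k| ≤ δ) :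
    |∑ k, c k * f k - ∑ k, c k * g k| ≤ (∑ k, |c k|) * δ := by
  rw [← Finset.sum_sub_distrib, Finset.sum_mul]
  refine (Finset.abs_sum_le_sum_abs _ _).trans (Finset.sum_le_sum fun k _ => ?_)
  rw [← mul_sub, abs_mul]
  exact mul_le_mul_of_nonneg_left (h k) (abs_nonneg _)

lemma abs_ite_sub_ite_le {p : Prop} [Decidable p] {x x' y y' δ : ℝ} (h : |x - y| ≤ δ)
    (h' : |x' - y'| ≤ δ) : |(if p then x else x') - (if p then y else y')| ≤ δ := by
  split_ifs <;> assumption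

section PayLipschitz
variable {n m : ℕ} (c : ℕ → ℝ) {b b' : Item n m → ℝ} (a : Alloc n m) (i : Fin n) {δ : ℝ}

lemma abs_gspPay_sub_le (hδ : 0 ≤ δ) (h : ∀ x, |b x - b' x| ≤ δ) :
    |gspPay c b a i - gspPay c b' a i| ≤ (∑ k : Fin (n * m), |c k|) * δ := by
  simp only [gspPay, ← mul_ite_zero]
  exact abs_sum_mul_sub_sum_mul_le _ fun k =>
    abs_ite_sub_ite_le (abs_fmax_sub_fmax_le hδ fun k' _ => h (a k')) (by simpa)

lemma abs_woptWithout_sub_le (hδ : 0 ≤ δ) (h : ∀ x, |b x - b' x| ≤ δ) :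
    |woptWithout c b i - woptWithout c b' i| ≤ (∑ k : Fin (n * m), |c k|) * δ := by
  have hexcl : ∀ x, |exclBids b i x - exclBids b' i x| ≤ δ := fun x =>
    abs_ite_sub_ite_le (by simpa) (h x)
  exact abs_fmax_sub_fmax_le (by positivity) fun a' _ =>
    abs_sum_mul_sub_sum_mul_le _ fun k => hexcl (a' k)

lemma abs_othersWelfare_sub_le (hδ : 0 ≤ δ) (h : ∀ x, |b x - b' x| ≤ δ) :
    |othersWelfare c b a i - othersWelfare c b' a i| ≤ (∑ k : Fin (n * m), |c k|) * δ := by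
  simp only [othersWelfare, ← mul_ite_zero]
  exact abs_sum_mul_sub_sum_mul_le _ fun k => abs_ite_sub_ite_le (h (a k)) (by simpa)

lemma abs_pay_sub_le (M : Mech) (hδ : 0 ≤ δ) (h : ∀ x, |b x - b' x| ≤ δ) :
    |pay M c b a i - pay M c b' a i| ≤ 2 * (∑ k : Fin (n * m), |c k|) * δ := by
  have hL : 0 ≤ (∑ k : Fin (n * m), |c k|) * δ := by positivity
  cases M
  · exact (abs_gspPay_sub_le c a i hδ h).trans (by linarith)
  · calc |vcgPay c b a i - vcgPay c b' a i|
        = |(woptWithout c b i - woptWithout c b' i)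
            - (othersWelfare c b a i - othersWelfare c b' a i)| := by rw [vcgPay, vcgPay]; ring_nf
      _ ≤ _ := abs_sub _ _
      _ ≤ 2 * (∑ k : Fin (n * m), |c k|) * δ := by
        linarith [abs_woptWithout_sub_le c i hδ h, abs_othersWelfare_sub_le c a i hδ h]

lemma continuous_pay (M : Mech) : Continuous fun b : Item n m → ℝ => pay M c b a i :=
  (LipschitzWith.of_dist_le' fun b b' => by
    simpa only [Real.dist_eq] using
      abs_pay_sub_le c a i M dist_nonneg fun x => by
        simpa only [Real.dist_eq] using dist_le_pi_dist b b' x).continuous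

end PayLipschitz

lemma addHaar_linearMap_preimage_singleton {E : Type*} [NormedAddCommGroup E] [NormedSpace ℝ E]
    [MeasurableSpace E] [BorelSpace E] [FiniteDimensional ℝ E] (μ : Measure E)
    [μ.IsAddHaarMeasure] {L : E →ₗ[ℝ] ℝ} (hL : L ≠ 0) (d : ℝ) : μ (L ⁻¹' {d}) = 0 := by
  obtain ⟨e, he⟩ : ∃ e, L e ≠ 0 := by
    by_contra! h
    exact hL (LinearMap.ext h)
  have hfiber : L ⁻¹' {d} = (· + -((d / L e) • e)) ⁻¹' (LinearMap.ker L : Set E) := by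
    ext ξ
    simp [sub_eq_zero, he, ← sub_eq_add_neg]
  rw [hfiber, measure_preimage_add_right]
  exact Measure.addHaar_submodule μ _ fun h => hL (LinearMap.ker_eq_top.mp h)

section Cube
variable {n m : ℕ} {ε : ℝ}

lemma cube_eq_restrict (n m : ℕ) (ε : ℝ) :
    cube n m ε = volume.restrict (Set.univ.pi fun _ : Item n m => Set.Icc 0 ε) := by
  rw [cube, volume_pi, Measure.restrict_pi_pi]

instance (n m : ℕ) (ε : ℝ) : IsFiniteMeasure (cube n m ε) := by
  unfold cube
  infer_instance

lemma measureReal_cube_univ (hε : 0 ≤ ε) : (cube n m ε).real Set.univ = ε ^ (n * m) := by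
  simp [cube, measureReal_def, Measure.pi_univ, hε]

lemma ae_cube_mem_Icc : ∀ᵐ ξ ∂cube n m ε, ∀ x, ξ x ∈ Set.Icc 0 ε := by
  rw [cube_eq_restrict]
  filter_upwards [ae_restrict_mem (MeasurableSet.univ_pi fun _ => measurableSet_Icc)]
    with ξ hξ x using hξ x trivial

lemma integrable_cube_of_continuous {f : (Item n m → ℝ) → ℝ} (hf : Continuous f) :
    Integrable f (cube n m ε) := by
  rw [cube_eq_restrict]
  exact hf.continuousOn.integrableOn_compact (isCompact_univ_pi fun _ => isCompact_Icc)

lemma continuous_pert (α : Fin n → ℝ) (v : Item n m → ℝ) : Continuous (pert α v) :=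
  continuous_pi fun x => continuous_const.add (continuous_apply x)

lemma ae_injective_pert (α : Fin n → ℝ) (v : Item n m → ℝ) :
    ∀ᵐ ξ ∂(volume : Measure (Item n m → ℝ)), Function.Injective (pert α v ξ) := by
  have htie : ∀ x y : Item n m, ∀ᵐ ξ ∂volume, pert α v ξ x = pert α v ξ y → x = y := by
    intro x y
    by_cases hxy : x = y
    · exact Eventually.of_forall fun _ _ => hxy
    set L : (Item n m → ℝ) →ₗ[ℝ] ℝ :=
      LinearMap.proj (R := ℝ) (φ := fun _ => ℝ) x - LinearMap.proj y
    have hL : L ≠ 0 := fun h => by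
      simpa [L, Ne.symm hxy] using LinearMap.congr_fun h (Pi.single x 1)
    rw [ae_iff]
    refine measure_mono_null (fun ξ hξ => ?_) (addHaar_linearMap_preimage_singleton volume hL
      (α y.1 * v y - α x.1 * v x))
    simp only [Set.mem_ofPred_eq, Classical.not_imp, pert] at hξ
    simp only [Set.mem_preimage, Set.mem_singleton_iff, L, LinearMap.sub_apply,
      LinearMap.proj_apply]
    linarith [hξ.1]
  filter_upwards [ae_all_iff.mpr fun x => ae_all_iff.mpr (htie x)] with ξ hξ x y
  exact hξ x y

lemma ae_cube_injective_pert (α : Fin n → ℝ) (v : Item n m → ℝ) :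
    ∀ᵐ ξ ∂cube n m ε, Function.Injective (pert α v ξ) := by
  rw [cube_eq_restrict]
  exact ae_restrict_of_ae (ae_injective_pert α v)

end Cube

section SortedIntegral
variable {n m : ℕ} {Ω : Type*} [MeasurableSpace Ω] {μ : Measure Ω} {β : Ω → Item n m → ℝ}

lemma measurableSet_validUnder (hβ : Measurable β) (a : Alloc n m) :
    MeasurableSet {ω | ValidUnder (β ω) a} := by
  simp only [ValidUnder, Set.ofPred_forall]
  exact .iInter fun k => .iInter fun k' => .iInter fun _ =>
    measurableSet_le ((measurable_pi_apply _).comp hβ) ((measurable_pi_apply _).comp hβ)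

lemma integral_comp_sortAlloc (hβ : Measurable β)
    (hinj : ∀ᵐ ω ∂μ, Function.Injective (β ω)) (F : Ω → Alloc n m → ℝ)
    (hF : ∀ a, Integrable (fun ω => F ω a) μ) :
    ∫ ω, F ω (sortAlloc (β ω)) ∂μ = ∑ a, ∫ ω in {ω | ValidUnder (β ω) a}, F ω a ∂μ := by
  have hsplit : ∀ᵐ ω ∂μ, F ω (sortAlloc (β ω))
      = ∑ a, {ω | ValidUnder (β ω) a}.indicator (fun ω => F ω a) ω := by
    filter_upwards [hinj] with ω hω
    rw [Finset.sum_eq_single_of_mem _ (Finset.mem_univ (sortAlloc (β ω))) fun a _ ha =>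
        Set.indicator_of_notMem (fun h => ha ((validUnder_iff_eq_sortAlloc hω).mp h)) _,
      Set.indicator_of_mem (validUnder_sortAlloc (β ω))]
  rw [integral_congr_ae hsplit,
    integral_finsetSum _ fun a _ => (hF a).indicator (measurableSet_validUnder hβ a)]
  exact Finset.sum_congr rfl fun a _ => integral_indicator (measurableSet_validUnder hβ a)

lemma integral_sortAlloc [IsFiniteMeasure μ] (hβ : Measurable β)
    (hinj : ∀ᵐ ω ∂μ, Function.Injective (β ω)) (g : Alloc n m → ℝ) :
    ∫ ω, g (sortAlloc (β ω)) ∂μ = ∑ a, μ.real {ω | ValidUnder (β ω) a} * g a := by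
  simp [integral_comp_sortAlloc hβ hinj (fun _ => g) fun _ => integrable_const _]

lemma abs_integral_comp_sortAlloc_sub_le [IsFiniteMeasure μ] (hβ : Measurable β)
    (hinj : ∀ᵐ ω ∂μ, Function.Injective (β ω)) (F : Ω → Alloc n m → ℝ)
    (hF : ∀ a, Integrable (fun ω => F ω a) μ) (g : Alloc n m → ℝ) {C : ℝ}
    (hC : ∀ᵐ ω ∂μ, ∀ a, |F ω a - g a| ≤ C) :
    |∫ ω, F ω (sortAlloc (β ω)) ∂μ - ∑ a, μ.real {ω | ValidUnder (β ω) a} * g a|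
      ≤ C * μ.real Set.univ := by
  have hsub : ∫ ω, F ω (sortAlloc (β ω)) ∂μ - ∑ a, μ.real {ω | ValidUnder (β ω) a} * g a
      = ∫ ω, (F ω (sortAlloc (β ω)) - g (sortAlloc (β ω))) ∂μ := by
    rw [integral_comp_sortAlloc hβ hinj F hF, integral_comp_sortAlloc hβ hinj
      (fun ω a => F ω a - g a) fun a => (hF a).sub (integrable_const _),
      ← Finset.sum_sub_distrib]
    refine Finset.sum_congr rfl fun a _ => ?_
    rw [integral_sub (hF a).integrableOn (integrable_const _), setIntegral_const, smul_eq_mul]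
  rw [hsub, ← Real.norm_eq_abs]
  exact norm_integral_le_of_norm_le_const (hC.mono fun ω h => h _)

end SortedIntegral

section Smoothed
variable {n m : ℕ} {c : ℕ → ℝ} {v : Item n m → ℝ} {ε : ℝ} {α : Fin n → ℝ}

lemma inducedDist_eq_measureReal (a : Alloc n m) : inducedDist v ε α a
    = (ε ^ (n * m))⁻¹ * (cube n m ε).real {ξ | ValidUnder (pert α v ξ) a} := rfl

lemma inducedDist_nonneg (hε : 0 < ε) (a : Alloc n m) : 0 ≤ inducedDist v ε α a := by
  rw [inducedDist]
  positivity

lemma sum_inducedDist (hε : 0 < ε) : ∑ a, inducedDist v ε α a = 1 := by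
  have hmass := integral_sortAlloc (continuous_pert α v).measurable
    (ae_cube_injective_pert (ε := ε) α v) fun _ => 1
  simp only [integral_const, smul_eq_mul, mul_one, measureReal_cube_univ hε.le] at hmass
  simp only [inducedDist_eq_measureReal, ← Finset.mul_sum, ← hmass]
  exact inv_mul_cancel₀ (by positivity)

lemma sVal_eq_sum (i : Fin n) :
    sVal c v ε α i = ∑ a, inducedDist v ε α a * bidderValue c v a i := by
  have hval : ∀ᵐ ξ ∂cube n m ε,
      valBid c v (pert α v ξ) i = bidderValue c v (sortAlloc (pert α v ξ)) i :=
    (ae_cube_injective_pert α v).mono fun ξ hξ =>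
      valBid_eq_bidderValue v hξ (validUnder_sortAlloc _) i
  rw [sVal, integral_congr_ae hval, integral_sortAlloc (continuous_pert α v).measurable
    (ae_cube_injective_pert α v) fun a => bidderValue c v a i, Finset.mul_sum]
  simp only [inducedDist_eq_measureReal, mul_assoc]

lemma abs_sPay_sub_sum_le (M : Mech) (hε : 0 < ε) (i : Fin n) :
    |sPay M c v ε α i - ∑ a, inducedDist v ε α a * pay M c (fun x => α x.1 * v x) a i|
      ≤ 2 * (∑ k : Fin (n * m), |c k|) * ε := by
  have hpay : ∀ᵐ ξ ∂cube n m ε,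
      payBid M c (pert α v ξ) i = pay M c (pert α v ξ) (sortAlloc (pert α v ξ)) i :=
    (ae_cube_injective_pert α v).mono fun ξ hξ =>
      payBid_eq_pay M hξ (validUnder_sortAlloc _) i
  have hclose : ∀ᵐ ξ ∂cube n m ε, ∀ a, |pay M c (pert α v ξ) a i
      - pay M c (fun x => α x.1 * v x) a i| ≤ 2 * (∑ k : Fin (n * m), |c k|) * ε :=
    ae_cube_mem_Icc.mono fun ξ hξ a => abs_pay_sub_le c a i M hε.le fun x => by
      simpa [pert, abs_of_nonneg (hξ x).1] using (hξ x).2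
  have hbound := abs_integral_comp_sortAlloc_sub_le (continuous_pert α v).measurable
    (ae_cube_injective_pert α v) (fun ξ a => pay M c (pert α v ξ) a i)
    (fun a => integrable_cube_of_continuous ((continuous_pay c a i M).comp (continuous_pert α v)))
    _ hclose
  rw [← integral_congr_ae hpay, measureReal_cube_univ hε.le] at hbound
  have hN : 0 < ε ^ (n * m) := by positivity
  rw [sPay]
  simp only [inducedDist_eq_measureReal, mul_assoc, ← Finset.mul_sum, ← mul_sub, abs_mul,
    abs_of_pos (inv_pos.mpr hN)]
  rw [inv_mul_le_iff₀ hN]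
  linarith

lemma le_add_of_inducedDist_pos {a : Alloc n m} (ha : 0 < inducedDist v ε α a)
    {k k' : Fin (n * m)} (hk : k ≤ k') :
    α (a k').1 * v (a k') ≤ α (a k).1 * v (a k) + ε := by
  have hS : cube n m ε {ξ | ValidUnder (pert α v ξ) a} ≠ 0 := fun h => by
    simp [inducedDist, h] at ha
  obtain ⟨ξ, hvalid, hξ⟩ := (frequently_ae_iff.mpr hS).and_eventually ae_cube_mem_Icc |>.exists
  have hle := hvalid k k' hk
  simp only [pert] at hle
  linarith [(hξ (a k')).1, (hξ (a k)).2]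

end Smoothed

section Limit
variable {n m : ℕ} {c : ℕ → ℝ} {v : Item n m → ℝ} {ι : Type*} {l : Filter ι}
  {ε : ι → ℝ} {α : ι → Fin n → ℝ} {α' : Fin n → ℝ} {π : Alloc n m → ℝ}

lemma tendsto_sVal (hπ : ∀ a, Tendsto (fun t => inducedDist v (ε t) (α t) a) l (𝓝 (π a)))
    (i : Fin n) :
    Tendsto (fun t => sVal c v (ε t) (α t) i) l (𝓝 (∑ a, π a * bidderValue c v a i)) := by
  simp only [sVal_eq_sum]
  exact tendsto_finsetSum _ fun a _ => (hπ a).mul_const _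

lemma tendsto_sPay (M : Mech) (hε : ∀ t, 0 < ε t) (hε0 : Tendsto ε l (𝓝 0))
    (hα : ∀ i, Tendsto (fun t => α t i) l (𝓝 (α' i)))
    (hπ : ∀ a, Tendsto (fun t => inducedDist v (ε t) (α t) a) l (𝓝 (π a))) (i : Fin n) :
    Tendsto (fun t => sPay M c v (ε t) (α t) i) l
      (𝓝 (∑ a, π a * pay M c (fun x => α' x.1 * v x) a i)) := by
  have hbids : Tendsto (fun t (x : Item n m) => α t x.1 * v x) l
      (𝓝 fun x => α' x.1 * v x) :=
    tendsto_pi_nhds.mpr fun x => (hα x.1).mul_const _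
  have hsum : Tendsto (fun t => ∑ a, inducedDist v (ε t) (α t) a
      * pay M c (fun x => α t x.1 * v x) a i) l
      (𝓝 (∑ a, π a * pay M c (fun x => α' x.1 * v x) a i)) :=
    tendsto_finsetSum _ fun a _ =>
      (hπ a).mul (((continuous_pay c a i M).tendsto _).comp hbids)
  refine hsum.congr_dist (squeeze_zero (fun _ => dist_nonneg) (fun t => ?_)
    (by simpa using hε0.const_mul (2 * ∑ k : Fin (n * m), |c k|)))
  rw [dist_comm, Real.dist_eq]
  exact abs_sPay_sub_sum_le M (hε t) i

lemma validUnder_of_tendsto [l.NeBot] (hε0 : Tendsto ε l (𝓝 0))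
    (hα : ∀ i, Tendsto (fun t => α t i) l (𝓝 (α' i)))
    (hπ : ∀ a, Tendsto (fun t => inducedDist v (ε t) (α t) a) l (𝓝 (π a)))
    {a : Alloc n m} (ha : 0 < π a) : ValidUnder (fun x => α' x.1 * v x) a := fun k k' hk =>
  le_of_tendsto_of_tendsto ((hα _).mul_const _) (by simpa using ((hα _).mul_const _).add hε0)
    (((hπ a).eventually (eventually_gt_nhds ha)).mono fun _ ht => le_add_of_inducedDist_pos ht hk)

end Limit

theorem limit_of_smoothed_equilibria_is_equilibrium_general
    (n m : ℕ) (v : Item n m → ℝ) (c : ℕ → ℝ) (A : ℝ)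
    (M : Mech)
    (εseq : ℕ → ℝ) (hεpos : ∀ t, 0 < εseq t)
    (hεlim : Filter.Tendsto εseq Filter.atTop (nhds 0))
    (αseq : ℕ → Fin n → ℝ)
    (hroiSeq : ∀ t (i : Fin n),
      sPay M c v (εseq t) (αseq t) i - εseq t * m ≤ sVal c v (εseq t) (αseq t) i)
    (hmaxSeq : ∀ t (i : Fin n),
      sPay M c v (εseq t) (αseq t) i < sVal c v (εseq t) (αseq t) i → αseq t i = A)
    (αstar : Fin n → ℝ)
    (hαlim : ∀ i : Fin n,
      Filter.Tendsto (fun t => αseq t i) Filter.atTop (nhds (αstar i)))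
    (πstar : Alloc n m → ℝ)
    (hπlim : ∀ a : Alloc n m,
      Filter.Tendsto (fun t => inducedDist v (εseq t) (αseq t) a) Filter.atTop
        (nhds (πstar a))) :
    (∀ a, 0 ≤ πstar a) ∧ (∑ a : Alloc n m, πstar a = 1) ∧
    (∀ a : Alloc n m, 0 < πstar a → ValidUnder (fun x => αstar x.1 * v x) a) ∧
    (∀ i : Fin n,
      ∑ a : Alloc n m, πstar a * pay M c (fun x => αstar x.1 * v x) a i
        ≤ ∑ a : Alloc n m, πstar a * bidderValue c v a i) ∧
    (∀ i : Fin n,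
      (∑ a : Alloc n m, πstar a * pay M c (fun x => αstar x.1 * v x) a i
        < ∑ a : Alloc n m, πstar a * bidderValue c v a i) → αstar i = A) := by
  have hPay := tendsto_sPay (c := c) M hεpos hεlim hαlim hπlim
  have hVal := tendsto_sVal (c := c) hπlim
  refine ⟨fun a => ge_of_tendsto' (hπlim a) fun t => inducedDist_nonneg (hεpos t) a, ?_,
    fun a => validUnder_of_tendsto hεlim hαlim hπlim, fun i => ?_, fun i hlt => ?_⟩
  · refine tendsto_nhds_unique (tendsto_finsetSum _ fun a _ => hπlim a) ?_
    simp only [sum_inducedDist (hεpos _), tendsto_const_nhds]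
  · have hroi := (hPay i).sub (hεlim.mul_const (m : ℝ))
    rw [zero_mul, sub_zero] at hroi
    exact le_of_tendsto_of_tendsto hroi (hVal i) (Eventually.of_forall (hroiSeq · i))
  · have hA : ∀ᶠ t in atTop, αseq t i = A :=
      ((hPay i).eventually_lt (hVal i) hlt).mono fun t => hmaxSeq t i
    exact tendsto_nhds_unique (hαlim i) (tendsto_const_nhds.congr' (hA.mono fun _ h => h.symm))

/-- The limit of smoothed autobidding equilibria (with vanishing noise) is an
autobidding equilibrium of the original auction. -/
theorem limit_of_smoothed_equilibria_is_equilibrium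
    (n m K : ℕ) (v : Item n m → ℝ) (c : ℕ → ℝ) (A : ℝ)
    (hv : ∀ x : Item n m, 0 ≤ v x)
    (hvmono : ∀ (i : Fin n) (j j' : Fin m), j ≤ j' → v (i, j') ≤ v (i, j))
    (hc1 : c 0 ≤ 1) (hc0 : ∀ k, 0 ≤ c k) (hcmono : Antitone c)
    (hcK : ∀ k, K ≤ k → c k = 0)
    (hA : 1 ≤ A) (M : Mech)
    (εseq : ℕ → ℝ) (hεpos : ∀ t, 0 < εseq t)
    (hεlim : Filter.Tendsto εseq Filter.atTop (nhds 0))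
    (αseq : ℕ → Fin n → ℝ) (hαmem : ∀ t i, αseq t i ∈ Set.Icc 1 A)
    (hroiSeq : ∀ t (i : Fin n),
      sPay M c v (εseq t) (αseq t) i - εseq t * m ≤ sVal c v (εseq t) (αseq t) i)
    (hmaxSeq : ∀ t (i : Fin n),
      sPay M c v (εseq t) (αseq t) i < sVal c v (εseq t) (αseq t) i → αseq t i = A)
    (αstar : Fin n → ℝ)
    (hαlim : ∀ i : Fin n,
      Filter.Tendsto (fun t => αseq t i) Filter.atTop (nhds (αstar i)))
    (πstar : Alloc n m → ℝ)
    (hπlim : ∀ a : Alloc n m,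
      Filter.Tendsto (fun t => inducedDist v (εseq t) (αseq t) a) Filter.atTop
        (nhds (πstar a))) :
    (∀ a, 0 ≤ πstar a) ∧ (∑ a : Alloc n m, πstar a = 1) ∧
    (∀ a : Alloc n m, 0 < πstar a → ValidUnder (fun x => αstar x.1 * v x) a) ∧
    (∀ i : Fin n,
      ∑ a : Alloc n m, πstar a * pay M c (fun x => αstar x.1 * v x) a i
        ≤ ∑ a : Alloc n m, πstar a * bidderValue c v a i) ∧
    (∀ i : Fin n,
      (∑ a : Alloc n m, πstar a * pay M c (fun x => αstar x.1 * v x) a i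
        < ∑ a : Alloc n m, πstar a * bidderValue c v a i) → αstar i = A) :=
  limit_of_smoothed_equilibria_is_equilibrium_general n m v c A M εseq hεpos hεlim αseq hroiSeq
    hmaxSeq αstar hαlim πstar hπlim

end
end SponsoredShopping
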